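/- arXiv:2501.05954 — 2 statements merged into one kernel-verified Lean document; each statement's English description precedes it below -/
import Mathlib

section
/- Let κ be an uncountable cardinal. Suppose there exist a club (closed unbounded) set S ⊆ κ⁺ and a sequence ⟨C_α : α ∈ S⟩ such that: (i) for every α ∈ S, C_α ⊆ S and C_α is a closed set of limit ordinals below α; (ii) for every α ∈ S of uncountable cofinality, C_α is unbounded in α; (iii) for all α, β ∈ S, if β ∈ C_α then C_β = β ∩ C_α; and (iv) for every α ∈ S the order type of C_α is at most κ. Then □'_κ holds, i.e., there exists a sequence ⟨C'_α : α < κ⁺⟩ defined on all ordinals below κ⁺ satisfying (i)–(iv) with S replaced by κ⁺. -/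
open Set Cardinal

universe u

/-- The order type of a set of ordinals. -/
noncomputable def otype (C : Set Ordinal.{u}) : Ordinal.{u + 1} :=
  Ordinal.type ((· < ·) : C → C → Prop)

/-- The order type of the set of ordinals `C` is at most the ordinal `o`. -/
noncomputable def OtypeLE (C : Set Ordinal.{u}) (o : Ordinal.{u}) : Prop :=
  otype C ≤ Ordinal.lift.{u + 1} o

/-- `C` is closed in `α`: the supremum of any nonempty subset of `C` that stays
below `α` belongs to `C`. -/
def IsClosedIn (C : Set Ordinal) (α : Ordinal) : Prop :=
  ∀ s ⊆ C, s.Nonempty → sSup s < α → sSup s ∈ C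

/-- `S` is a club (closed unbounded) subset of `α`. -/
def IsClubIn (S : Set Ordinal) (α : Ordinal) : Prop :=
  S ⊆ Set.Iio α ∧ IsClosedIn S α ∧ ∀ β < α, ∃ γ ∈ S, β < γ

/-- `β` is a limit point of the set of ordinals `C`. -/
def IsLimitPointOf (β : Ordinal) (C : Set Ordinal) : Prop :=
  β ≠ 0 ∧ ∀ γ < β, ∃ δ ∈ C, γ < δ ∧ δ < β

/-- `⟨C α : α ∈ S⟩` is an almost coherent sequence on `S`: for all `α, β ∈ S`,
(1) `C α ⊆ S` and `C α` is a closed set of limit ordinals below `α`,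
(2) if `cof α > ω` then `C α` is unbounded in `α`, and
(3) if `β ∈ C α` then `C β = β ∩ C α`. -/
def AlmostCoherentOn (S : Set Ordinal) (C : Ordinal → Set Ordinal) : Prop :=
  ∀ α ∈ S,
    C α ⊆ S ∧
    (∀ β ∈ C α, β < α ∧ Order.IsSuccLimit β) ∧
    IsClosedIn (C α) α ∧
    (Cardinal.aleph0 < α.cof → ∀ γ < α, ∃ δ ∈ C α, γ < δ) ∧
    (∀ β ∈ C α, C β = C α ∩ Set.Iio β)

/-- `⟨E α : α < λ⟩` is a coherent sequence: for every limit `α < λ`, `E α` is a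
club subset of `α`, and `E β = β ∩ E α` whenever `β` is a limit point of `E α`. -/
def IsCoherentSeq (lam : Ordinal) (E : Ordinal → Set Ordinal) : Prop :=
  ∀ α < lam, Order.IsSuccLimit α →
    IsClubIn (E α) α ∧
    ∀ β, IsLimitPointOf β (E α) → E β = E α ∩ Set.Iio β

/-!
Outside a club `W` of `θ`, every `α` lies in a gap `(ν, B]` with `ν = sup (W ∩ α)` and
`B = min (W \ α)`. On that gap take the translate `ν + D` of a `□'_κ`-sequence `D` on the ordinal
`B - ν`: the ladders it assigns stay strictly inside the gap, so coherence is inherited from `D`,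
and cofinality is preserved because `cof (ν + e) = cof e`. For `θ = κ⁺` and `W = S` this leaves
the given ladders on `S` untouched. The sequences on the ordinals `B - ν < κ⁺` are built in the
same way by induction: at a limit `θ` one glues along the closure of a cofinal set `A` of order
type `cof θ ≤ κ`, and gives each limit point `b` of `A` the ladder of limit points of `A` below
`b`, whose order type is at most that of `A`.
-/

open Order Function

lemma otype_mono {C D : Set Ordinal.{u}} (h : C ⊆ D) : otype C ≤ otype D :=
  Ordinal.type_le_iff'.2 ⟨⟨⟨Set.inclusion h, Set.inclusion_injective h⟩, Iff.rfl⟩⟩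

lemma otype_image_of_strictMonoOn {f : Ordinal.{u} → Ordinal.{u}} {C : Set Ordinal.{u}}
    (hf : StrictMonoOn f C) : otype (f '' C) = otype C :=
  (hf.orderIso f C).ordinalType_congr.symm

lemma otype_le_of_strictMonoOn {f : Ordinal.{u} → Ordinal.{u}} {C D : Set Ordinal.{u}}
    (hf : StrictMonoOn f C) (hCD : MapsTo f C D) : otype C ≤ otype D :=
  otype_image_of_strictMonoOn hf ▸ otype_mono (image_subset_iff.2 hCD)

lemma exists_subset_Iio_cofinal_otype_eq_cof (θ : Ordinal.{u}) :
    ∃ A ⊆ Iio θ, (∀ γ < θ, ∃ a ∈ A, γ ≤ a) ∧ otype A = Ordinal.lift.{u + 1} θ.cof.ord := by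
  obtain ⟨s, hs, hs_type⟩ := Ordinal.exists_ord_cof_eq (Iio θ)
  refine ⟨Subtype.val '' s, by rintro _ ⟨a, -, rfl⟩; exact a.2, fun γ hγ => ?_, ?_⟩
  · obtain ⟨a, ha, hγa⟩ := hs ⟨γ, hγ⟩
    exact ⟨a, mem_image_of_mem _ ha, hγa⟩
  · rw [Ordinal.cof_Iio, ← Ordinal.lift_cof, ← Cardinal.lift_ord] at hs_type
    rw [← hs_type]
    exact ((Subtype.strictMono_coe _).strictMonoOn s).orderIso.ordinalType_congr.symm

namespace IsLimitPointOf

variable {β : Ordinal.{u}} {A s : Set Ordinal.{u}}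

lemma isSuccLimit (h : IsLimitPointOf β A) : IsSuccLimit β := by
  refine Ordinal.isSuccLimit_iff.2 ⟨h.1, isSuccPrelimit_of_succ_lt fun γ hγ => ?_⟩
  obtain ⟨δ, -, hγδ, hδβ⟩ := h.2 γ hγ
  exact (succ_le_of_lt hγδ).trans_lt hδβ

lemma of_forall_mem_or (h : IsLimitPointOf β s) (hs : ∀ x ∈ s, x ∈ A ∨ IsLimitPointOf x A) :
    IsLimitPointOf β A := by
  refine ⟨h.1, fun γ hγ => ?_⟩
  obtain ⟨δ, hδ, hγδ, hδβ⟩ := h.2 γ hγ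
  rcases hs δ hδ with hδA | hδA
  · exact ⟨δ, hδA, hγδ, hδβ⟩
  · obtain ⟨ε, hε, hγε, hεδ⟩ := hδA.2 γ hγδ
    exact ⟨ε, hε, hγε, hεδ.trans hδβ⟩

lemma mono (h : IsLimitPointOf β s) (hsA : s ⊆ A) : IsLimitPointOf β A :=
  h.of_forall_mem_or fun _ hx => Or.inl (hsA hx)

end IsLimitPointOf

lemma sSup_mem_or_isLimitPointOf {s : Set Ordinal.{u}} (hs : s.Nonempty) (hbdd : BddAbove s) :
    sSup s ∈ s ∨ IsLimitPointOf (sSup s) s := by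
  refine or_iff_not_imp_left.2 fun hns => ⟨fun h0 => hns ?_, fun γ hγ => ?_⟩
  · obtain ⟨x, hx⟩ := hs
    rwa [h0, ← nonpos_iff_eq_zero.1 (h0 ▸ le_csSup hbdd hx)]
  · obtain ⟨x, hx, hγx⟩ := exists_lt_of_lt_csSup hs hγ
    exact ⟨x, hx, hγx, (le_csSup hbdd hx).lt_of_ne fun h => hns (h ▸ hx)⟩

def limitPointsBelow (A : Set Ordinal.{u}) (b : Ordinal.{u}) : Set Ordinal.{u} :=
  {x | x < b ∧ IsLimitPointOf x A}

section limitPointsBelow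

variable {A : Set Ordinal.{u}} {b : Ordinal.{u}}

lemma isClosedIn_limitPointsBelow : IsClosedIn (limitPointsBelow A b) b := by
  intro s hs hne hlt
  refine ⟨hlt, ?_⟩
  rcases sSup_mem_or_isLimitPointOf hne ⟨b, fun x hx => (hs hx).1.le⟩ with h | h
  · exact (hs h).2
  · exact h.of_forall_mem_or fun x hx => Or.inr (hs hx).2

lemma isClosedIn_union_limitPointsBelow (hA : A ⊆ Iio b) :
    IsClosedIn (A ∪ limitPointsBelow A b) b := by
  intro s hs hne hlt
  have hsb : s ⊆ Iio b := hs.trans (union_subset hA fun x hx => hx.1)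
  rcases sSup_mem_or_isLimitPointOf hne ⟨b, fun x hx => (hsb hx).le⟩ with h | h
  · exact hs h
  · exact Or.inr ⟨hlt, h.of_forall_mem_or fun x hx => (hs hx).imp_right And.right⟩

lemma exists_mem_limitPointsBelow_gt (hb : IsLimitPointOf b A) (hcof : ℵ₀ < b.cof)
    {γ : Ordinal.{u}} (hγ : γ < b) : ∃ σ ∈ limitPointsBelow A b, γ < σ := by
  classical
  -- `nfp F γ` is the supremum of `γ < F γ < F (F γ) < ⋯`, a sequence in `A`
  let F : Ordinal.{u} → Ordinal.{u} := fun x => sInf {a | a ∈ A ∧ x < a}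
  have hF : ∀ x < b, F x ∈ A ∧ x < F x ∧ F x < b := fun x hx => by
    obtain ⟨a, ha, hxa, hab⟩ := hb.2 x hx
    have hmem := csInf_mem (s := {a | a ∈ A ∧ x < a}) ⟨a, ha, hxa⟩
    exact ⟨hmem.1, hmem.2, (csInf_le' (s := {a | a ∈ A ∧ x < a}) ⟨ha, hxa⟩).trans_lt hab⟩
  have hσb : Ordinal.nfp F γ < b := Ordinal.nfp_lt_ord hcof (fun x hx => (hF x hx).2.2) hγ
  have hit : ∀ n, F^[n] γ < b := fun n => (Ordinal.iterate_le_nfp F γ n).trans_lt hσb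
  have hγσ : γ < Ordinal.nfp F γ :=
    (hF γ hγ).2.1.trans_le (Ordinal.iterate_le_nfp F γ 1)
  refine ⟨Ordinal.nfp F γ, ⟨hσb, (zero_le.trans_lt hγσ).ne', fun γ' hγ' => ?_⟩, hγσ⟩
  obtain ⟨n, hn⟩ := Ordinal.lt_nfp_iff.1 hγ'
  have hFn := hF _ (hit n)
  have hFFn := hF _ (hit (n + 1))
  rw [iterate_succ_apply'] at hFFn
  refine ⟨F (F^[n] γ), hFn.1, hn.trans hFn.2.1, hFFn.2.1.trans_le ?_⟩
  simpa only [iterate_succ_apply'] using Ordinal.iterate_le_nfp F γ (n + 2)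

lemma otype_limitPointsBelow_le (hb : IsLimitPointOf b A) :
    otype (limitPointsBelow A b) ≤ otype A := by
  classical
  -- a point of `A` lies between any two limit points of `A`, so `x ↦ min (A \ x)` is increasing
  let g : Ordinal.{u} → Ordinal.{u} := fun x => sInf {a | a ∈ A ∧ x ≤ a}
  have hg : ∀ x ∈ limitPointsBelow A b, g x ∈ A ∧ x ≤ g x := fun x hx => by
    obtain ⟨a, ha, hxa, -⟩ := hb.2 x hx.1
    exact csInf_mem (s := {a | a ∈ A ∧ x ≤ a}) ⟨a, ha, hxa.le⟩
  refine otype_le_of_strictMonoOn (f := g) (fun x hx y hy hxy => ?_) fun x hx => (hg x hx).1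
  obtain ⟨a, ha, hxa, hay⟩ := hy.2.2 x hxy
  exact (csInf_le' (s := {a | a ∈ A ∧ x ≤ a}) ⟨ha, hxa.le⟩).trans_lt (hay.trans_le (hg y hy).2)

end limitPointsBelow

/-- The clauses of `□'_κ` at the index `α`, except `C α ⊆ S`. -/
def IsSquarePrimeAt (κ : Cardinal.{u}) (C : Ordinal.{u} → Set Ordinal.{u}) (α : Ordinal.{u}) :
    Prop :=
  ((∀ β ∈ C α, β < α ∧ IsSuccLimit β) ∧
    IsClosedIn (C α) α ∧
    (ℵ₀ < α.cof → ∀ γ < α, ∃ δ ∈ C α, γ < δ) ∧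
    (∀ β ∈ C α, C β = C α ∩ Iio β)) ∧
    OtypeLE (C α) κ.ord

section IsSquarePrimeAt

variable {κ : Cardinal.{u}} {C D : Ordinal.{u} → Set Ordinal.{u}} {α : Ordinal.{u}}

lemma IsSquarePrimeAt.congr (h : IsSquarePrimeAt κ C α) (hα : D α = C α)
    (hβ : ∀ β ∈ C α, D β = C β) : IsSquarePrimeAt κ D α := by
  obtain ⟨⟨hlim, hcl, hunb, hcoh⟩, hot⟩ := h
  rw [← hα] at hlim hcl hunb hcoh hot hβ
  exact ⟨⟨hlim, hcl, hunb, fun β hβ' => (hβ β hβ').trans (hcoh β hβ')⟩, hot⟩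

lemma isSquarePrimeAt_of_eq_empty (h : C α = ∅) (hα : α.cof ≤ ℵ₀) : IsSquarePrimeAt κ C α := by
  refine ⟨⟨?_, ?_, fun hcof => absurd hα hcof.not_ge, ?_⟩, ?_⟩
  · simp [h]
  · simp [h, IsClosedIn]
  · simp [h]
  · rw [OtypeLE, h, otype, Ordinal.type_eq_zero_of_empty]
    exact zero_le

lemma forall_le_isSquarePrimeAt_update {θ : Ordinal.{u}} {X : Set Ordinal.{u}}
    (hC : ∀ α < θ, IsSquarePrimeAt κ C α) (hθ : IsSquarePrimeAt κ (update C θ X) θ) :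
    ∀ α ≤ θ, IsSquarePrimeAt κ (update C θ X) α := by
  intro α hα
  rcases hα.lt_or_eq with hα | rfl
  · refine (hC α hα).congr (update_of_ne hα.ne _ _) fun β hβ => update_of_ne ?_ _ _
    exact ((hC α hα).1.1 β hβ).1.trans hα |>.ne
  · exact hθ

lemma isSquarePrimeAt_limitPointsBelow {A : Set Ordinal.{u}} {b : Ordinal.{u}}
    (hA : otype A ≤ Ordinal.lift.{u + 1} κ.ord) (hb : IsLimitPointOf b A) :
    IsSquarePrimeAt κ (limitPointsBelow A) b := by
  refine ⟨⟨fun x hx => ⟨hx.1, hx.2.isSuccLimit⟩, isClosedIn_limitPointsBelow,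
    fun hcof γ hγ => exists_mem_limitPointsBelow_gt hb hcof hγ, fun x hx => ?_⟩,
    (otype_limitPointsBelow_le hb).trans hA⟩
  ext y
  exact ⟨fun hy => ⟨⟨hy.1.trans hx.1, hy.2⟩, hy.1⟩, fun hy => ⟨hy.2, hy.1.2⟩⟩

end IsSquarePrimeAt

lemma IsClosedIn.image_add {D : Set Ordinal.{u}} {e : Ordinal.{u}} (hD : IsClosedIn D e)
    (hDe : D ⊆ Iio e) (ν : Ordinal.{u}) : IsClosedIn ((ν + ·) '' D) (ν + e) := by
  intro s hs hne hlt
  set t := D ∩ (ν + ·) ⁻¹' s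
  have hts : (ν + ·) '' t = s := by rw [image_inter_preimage, inter_eq_right.2 hs]
  have htne : t.Nonempty := by
    obtain ⟨_, hy⟩ := hne
    obtain ⟨x, hx, rfl⟩ := hs hy
    exact ⟨x, hx, hy⟩
  have hsup : sSup s = ν + sSup t := by
    rw [← hts, (Ordinal.isNormal_add_right ν).map_sSup htne ⟨e, fun x hx => (hDe hx.1).le⟩]
  rw [hsup] at hlt ⊢
  exact mem_image_of_mem _ (hD t inter_subset_left htne (lt_of_add_lt_add_left hlt))

def shiftSeq (ν : Ordinal.{u}) (D : Ordinal.{u} → Set Ordinal.{u}) (α : Ordinal.{u}) :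
    Set Ordinal.{u} :=
  (ν + ·) '' D (α - ν)

lemma shiftSeq_add (ν e : Ordinal.{u}) (D : Ordinal.{u} → Set Ordinal.{u}) :
    shiftSeq ν D (ν + e) = (ν + ·) '' D e := by
  rw [shiftSeq, Ordinal.add_sub_cancel]

lemma IsSquarePrimeAt.shiftSeq {κ : Cardinal.{u}} {D : Ordinal.{u} → Set Ordinal.{u}}
    {e : Ordinal.{u}} (h : IsSquarePrimeAt κ D e) (ν : Ordinal.{u})
    (he : ℵ₀ < (ν + e).cof → e ≠ 0) : IsSquarePrimeAt κ (shiftSeq ν D) (ν + e) := by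
  obtain ⟨⟨hlim, hcl, hunb, hcoh⟩, hot⟩ := h
  have hmono : StrictMono (ν + ·) := Ordinal.isNormal_add_right ν |>.strictMono
  rw [IsSquarePrimeAt, shiftSeq_add]
  refine ⟨⟨?_, hcl.image_add (fun x hx => (hlim x hx).1) ν, fun hcof γ hγ => ?_, ?_⟩, ?_⟩
  · rintro _ ⟨x, hx, rfl⟩
    exact ⟨hmono (hlim x hx).1, Ordinal.isSuccLimit_add ν (hlim x hx).2⟩
  · have he0 := he hcof
    rw [Ordinal.cof_add ν he0] at hcof
    obtain ⟨x, hx, hγx⟩ := hunb hcof (γ - ν) (Ordinal.sub_lt_of_lt_add hγ (pos_iff_ne_zero.2 he0))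
    exact ⟨ν + x, mem_image_of_mem _ hx, (Ordinal.le_add_sub γ ν).trans_lt (hmono hγx)⟩
  · rintro _ ⟨x, hx, rfl⟩
    rw [shiftSeq_add, hcoh x hx]
    ext y
    constructor
    · rintro ⟨z, ⟨hz, hzx⟩, rfl⟩
      exact ⟨⟨z, hz, rfl⟩, hmono hzx⟩
    · rintro ⟨⟨z, hz, rfl⟩, hzx⟩
      exact ⟨z, ⟨hz, (add_lt_add_iff_left ν).1 hzx⟩, rfl⟩
  · rw [OtypeLE, otype_image_of_strictMonoOn (hmono.strictMonoOn _)]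
    exact hot

noncomputable def supBelow (W : Set Ordinal.{u}) (α : Ordinal.{u}) : Ordinal.{u} :=
  sSup (W ∩ Iio α)

noncomputable def infAbove (W : Set Ordinal.{u}) (α : Ordinal.{u}) : Ordinal.{u} :=
  sInf (W ∩ Ici α)

section gap

variable {W : Set Ordinal.{u}} {α β θ : Ordinal.{u}}

lemma supBelow_le : supBelow W α ≤ α := csSup_le' fun _ hx => hx.2.le

lemma le_supBelow (hβ : β ∈ W) (hβα : β < α) : β ≤ supBelow W α :=
  le_csSup (bddAbove_Iio.mono inter_subset_right) ⟨hβ, hβα⟩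

lemma lt_iff_lt_of_supBelow_lt (h : supBelow W α < β) (hβα : β ≤ α) {w : Ordinal.{u}}
    (hw : w ∈ W) : w < β ↔ w < α :=
  ⟨fun hw' => hw'.trans_le hβα, fun hw' => (le_supBelow hw hw').trans_lt h⟩

lemma supBelow_eq_of_supBelow_lt (h : supBelow W α < β) (hβα : β ≤ α) :
    supBelow W β = supBelow W α := by
  rw [supBelow, supBelow]
  congr 1
  ext w
  exact and_congr_right fun hw => lt_iff_lt_of_supBelow_lt h hβα hw

lemma infAbove_eq_of_supBelow_lt (h : supBelow W α < β) (hβα : β ≤ α) :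
    infAbove W β = infAbove W α := by
  rw [infAbove, infAbove]
  congr 1
  ext w
  exact and_congr_right fun hw => by
    simpa only [mem_Ici, not_lt] using not_iff_not.2 (lt_iff_lt_of_supBelow_lt h hβα hw)

lemma infAbove_mem_inter_Ici (hW : ∀ γ < θ, ∃ w ∈ W, γ ≤ w) (hα : α < θ) :
    infAbove W α ∈ W ∩ Ici α :=
  csInf_mem (hW α hα)

lemma mem_and_isLimitPointOf_of_supBelow_eq (hW : IsClosedIn W θ) (hα : α < θ) (hα0 : α ≠ 0)
    (h : supBelow W α = α) : α ∈ W ∧ IsLimitPointOf α W := by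
  rw [supBelow] at h
  have hne : (W ∩ Iio α).Nonempty :=
    nonempty_iff_ne_empty.2 fun hemp => hα0 (by rw [← h, hemp, csSup_empty]; rfl)
  rcases sSup_mem_or_isLimitPointOf hne (bddAbove_Iio.mono inter_subset_right) with hmem | hlp
  · rw [h] at hmem
    exact absurd hmem.2 (lt_irrefl α)
  · have hmem := hW _ inter_subset_left hne (by rw [h]; exact hα)
    rw [h] at hmem hlp
    exact ⟨hmem, hlp.mono inter_subset_left⟩

end gap

lemma exists_isSquarePrimeAt_extension {κ : Cardinal.{u}} {θ : Ordinal.{u}}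
    (H : ∀ δ < θ, ∃ D, ∀ α ≤ δ, IsSquarePrimeAt κ D α) {W T : Set Ordinal.{u}}
    {C : Ordinal.{u} → Set Ordinal.{u}} (hWθ : W ⊆ Iio θ) (hWcl : IsClosedIn W θ)
    (hWunb : ∀ γ < θ, ∃ w ∈ W, γ ≤ w) (hTW : T ⊆ W)
    (hWT : ∀ w ∈ W, IsLimitPointOf w W → w ∈ T)
    (hC : ∀ α ∈ T, C α ⊆ T ∧ IsSquarePrimeAt κ C α) :
    ∃ C' : Ordinal.{u} → Set Ordinal.{u}, EqOn C' C T ∧ ∀ α < θ, IsSquarePrimeAt κ C' α := by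
  classical
  have H' : ∀ δ, ∃ D, δ < θ → ∀ α ≤ δ, IsSquarePrimeAt κ D α := fun δ =>
    if hδ : δ < θ then (H δ hδ).imp fun _ hD _ => hD else ⟨fun _ => ∅, fun h => absurd h hδ⟩
  choose G hG using H'
  let C' : Ordinal.{u} → Set Ordinal.{u} := fun α =>
    if α ∈ T then C α else shiftSeq (supBelow W α) (G (infAbove W α - supBelow W α)) α
  refine ⟨C', fun α hα => if_pos hα, fun α hα => ?_⟩
  by_cases hαT : α ∈ T
  · exact (hC α hαT).2.congr (if_pos hαT) fun β hβ => if_pos ((hC α hαT).1 hβ)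
  set ν := supBelow W α
  set D := G (infAbove W α - ν)
  obtain ⟨hBW, hαB⟩ := infAbove_mem_inter_Ici hWunb hα
  have hν : ν + (α - ν) = α := Ordinal.add_sub_cancel_of_le supBelow_le
  have hD : IsSquarePrimeAt κ D (α - ν) :=
    hG _ ((Ordinal.sub_le_self _ _).trans_lt (hWθ hBW)) _
      (Ordinal.sub_le.2 (hαB.trans (Ordinal.le_add_sub _ ν)))
  have hshift := hD.shiftSeq ν fun hcof => by
    rw [hν] at hcof
    have hα0 : α ≠ 0 := by rintro rfl; simp at hcof
    have hνα : ν < α := supBelow_le.lt_of_ne fun h =>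
      hαT (hWT α (mem_and_isLimitPointOf_of_supBelow_eq hWcl hα hα0 h).1
        (mem_and_isLimitPointOf_of_supBelow_eq hWcl hα hα0 h).2)
    exact Ordinal.sub_ne_zero_iff_lt.2 hνα
  rw [hν] at hshift
  -- the points of the ladder at `α` lie in the open gap `(ν, α)`, which has the same `ν` and `B`
  refine hshift.congr (if_neg hαT) fun β hβ => ?_
  have hβα := (hshift.1.1 β hβ).1
  have hνβ : ν < β := by
    obtain ⟨e, he, rfl⟩ := hβ
    exact lt_add_of_pos_right ν (hD.1.1 e he).2.bot_lt
  have hβT : β ∉ T := fun h => (le_supBelow (hTW h) hβα).not_gt hνβ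
  simp only [C', if_neg hβT, supBelow_eq_of_supBelow_lt hνβ hβα.le,
    infAbove_eq_of_supBelow_lt hνβ hβα.le]
  rfl

lemma exists_forall_le_isSquarePrimeAt_of_isSuccLimit {κ : Cardinal.{u}} {θ : Ordinal.{u}}
    (hlim : IsSuccLimit θ) (hθ : θ.cof ≤ κ) (IH : ∀ δ < θ, ∃ D, ∀ α ≤ δ, IsSquarePrimeAt κ D α) :
    ∃ D : Ordinal.{u} → Set Ordinal.{u}, ∀ α ≤ θ, IsSquarePrimeAt κ D α := by
  obtain ⟨A, hAθ, hAcof, hA_otype⟩ := exists_subset_Iio_cofinal_otype_eq_cof θ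
  have hθA : IsLimitPointOf θ A := ⟨hlim.ne_bot, fun γ hγ => by
    obtain ⟨a, ha, hγa⟩ := hAcof (succ γ) (hlim.succ_lt hγ)
    exact ⟨a, ha, (lt_succ γ).trans_le hγa, hAθ ha⟩⟩
  have hAκ : otype A ≤ Ordinal.lift.{u + 1} κ.ord :=
    hA_otype ▸ Ordinal.lift_le.2 (Cardinal.ord_le_ord.2 hθ)
  have hWθ : A ∪ limitPointsBelow A θ ⊆ Iio θ := union_subset hAθ fun x hx => hx.1
  obtain ⟨C', hC'L, hC'⟩ := exists_isSquarePrimeAt_extension IH hWθ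
    (isClosedIn_union_limitPointsBelow hAθ)
    (fun γ hγ => (hAcof γ hγ).imp fun a ha => ⟨Or.inl ha.1, ha.2⟩) subset_union_right
    (fun w hw hlp => ⟨hWθ hw, hlp.of_forall_mem_or fun x hx => hx.imp_right And.right⟩)
    (fun b hb => ⟨fun x hx => ⟨hx.1.trans hb.1, hx.2⟩,
      isSquarePrimeAt_limitPointsBelow hAκ hb.2⟩)
  refine ⟨update C' θ (limitPointsBelow A θ), forall_le_isSquarePrimeAt_update hC' ?_⟩
  exact (isSquarePrimeAt_limitPointsBelow hAκ hθA).congr (by simp)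
    fun β hβ => by simp [hβ.1.ne, hC'L hβ]

theorem exists_forall_le_isSquarePrimeAt (κ : Cardinal.{u}) (θ : Ordinal.{u}) (hθ : θ.card ≤ κ) :
    ∃ D : Ordinal.{u} → Set Ordinal.{u}, ∀ α ≤ θ, IsSquarePrimeAt κ D α := by
  induction θ using WellFoundedLT.induction with | _ θ IH =>
  have IH' : ∀ ξ < θ, ∃ D, ∀ α ≤ ξ, IsSquarePrimeAt κ D α := fun ξ hξ =>
    IH ξ hξ ((Ordinal.card_le_card hξ.le).trans hθ)
  rcases Ordinal.zero_or_succ_or_isSuccLimit θ with rfl | ⟨ξ, rfl⟩ | hlim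
  · refine ⟨fun _ => ∅, fun α hα => isSquarePrimeAt_of_eq_empty rfl ?_⟩
    simp [nonpos_iff_eq_zero.1 hα]
  · obtain ⟨D, hD⟩ := IH' ξ (lt_succ ξ)
    exact ⟨update D (succ ξ) ∅, forall_le_isSquarePrimeAt_update
      (fun α hα => hD α (lt_succ_iff.1 hα)) (isSquarePrimeAt_of_eq_empty (by simp) (by simp))⟩
  · exact exists_forall_le_isSquarePrimeAt_of_isSuccLimit hlim
      ((Ordinal.cof_le_card θ).trans hθ) IH'

theorem squarePrime_of_almostCoherent_on_club_general (κ : Cardinal.{u})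
    (S : Set Ordinal.{u}) (C : Ordinal.{u} → Set Ordinal.{u})
    (hS : IsClubIn S (Order.succ κ).ord)
    (hAC : AlmostCoherentOn S C)
    (hot : ∀ α ∈ S, OtypeLE (C α) κ.ord) :
    ∃ C' : Ordinal.{u} → Set Ordinal.{u},
      AlmostCoherentOn (Set.Iio (Order.succ κ).ord) C' ∧
      ∀ α < (Order.succ κ).ord, OtypeLE (C' α) κ.ord := by
  obtain ⟨hSκ, hS_closed, hS_unb⟩ := hS
  have H : ∀ δ < (succ κ).ord, ∃ D, ∀ α ≤ δ, IsSquarePrimeAt κ D α := fun δ hδ =>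
    exists_forall_le_isSquarePrimeAt κ δ (lt_succ_iff.1 (Cardinal.lt_ord.1 hδ))
  obtain ⟨C', -, hC'⟩ := exists_isSquarePrimeAt_extension H hSκ hS_closed
    (fun γ hγ => (hS_unb γ hγ).imp fun _ h => ⟨h.1, h.2.le⟩) subset_rfl (fun w hw _ => hw)
    fun α hα => ⟨(hAC α hα).1, (hAC α hα).2, hot α hα⟩
  exact ⟨C', fun α hα => ⟨fun β hβ => ((hC' α hα).1.1 β hβ).1.trans hα, (hC' α hα).1⟩,
    fun α hα => (hC' α hα).2⟩

/-- If there is an almost coherent sequence, with order types at most `κ`, indexed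
by a club subset `S` of `κ⁺`, then `□'_κ` holds: there is such a sequence indexed
by all ordinals below `κ⁺`. -/
theorem squarePrime_of_almostCoherent_on_club (κ : Cardinal.{u})
    (hκ : Cardinal.aleph0 < κ)
    (S : Set Ordinal.{u}) (C : Ordinal.{u} → Set Ordinal.{u})
    (hS : IsClubIn S (Order.succ κ).ord)
    (hAC : AlmostCoherentOn S C)
    (hot : ∀ α ∈ S, OtypeLE (C α) κ.ord) :
    ∃ C' : Ordinal.{u} → Set Ordinal.{u},
      AlmostCoherentOn (Set.Iio (Order.succ κ).ord) C' ∧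
      ∀ α < (Order.succ κ).ord, OtypeLE (C' α) κ.ord :=
  squarePrime_of_almostCoherent_on_club_general κ S C hS hAC hot
end

section
/- Let κ be an uncountable cardinal. If □'_κ holds, then □_κ holds. That is, if there is an almost coherent sequence ⟨C_α : α < κ⁺⟩ with ot(C_α) ≤ κ for all α < κ⁺, then there is a coherent sequence ⟨E_α : α < κ⁺⟩ such that for every limit ordinal α < κ⁺, if cof(α) < κ then |E_α| < κ. -/
open Set Cardinal

universe u

/-!
Send each `C α` that is unbounded in `α` onto its order type `ot (C α) ≤ κ` by the transitive
collapse and pull back a fixed coherent sequence `c` on the limit ordinals `≤ κ`: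
`E α = {β ∈ C α | ot (C α ∩ β) ∈ c (ot (C α))}`. The coherence of `C` (limit points of `E α` lie
in `C α`, and there `C β = C α ∩ β`) and of `c` make `E` coherent, and `|E α| ≤ |c (ot (C α))|`.
This is `< κ` unless `ot (C α) = κ`; then `cf κ = cf α < κ`, and `c κ` is the closure of a
cofinal subset of `κ` of size `cf κ`. If `C α` is bounded in `α`, then `cf α = ω` and `E α` is
any cofinal `ω`-sequence.
-/

universe v

namespace IsLimitPointOf

variable {β : Ordinal} {X Y : Set Ordinal}

theorem mono_s1 (h : IsLimitPointOf β X) (hXY : X ⊆ Y) : IsLimitPointOf β Y :=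
  ⟨h.1, fun γ hγ => (h.2 γ hγ).imp fun _ ⟨hδ, hδ'⟩ => ⟨hXY hδ, hδ'⟩⟩

theorem le_of_subset_Iio {α : Ordinal} (h : IsLimitPointOf β X) (hX : X ⊆ Iio α) : β ≤ α := by
  by_contra! hαβ
  obtain ⟨δ, hδ, hαδ, -⟩ := h.2 α hαβ
  exact (hX hδ).not_gt hαδ

theorem inter_Iio_nonempty (h : IsLimitPointOf β X) : (X ∩ Iio β).Nonempty := by
  obtain ⟨δ, hδ, -, hδβ⟩ := h.2 0 (pos_iff_ne_zero.2 h.1)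
  exact ⟨δ, hδ, hδβ⟩

theorem sSup_inter_Iio (h : IsLimitPointOf β X) : sSup (X ∩ Iio β) = β := by
  refine (csSup_le h.inter_Iio_nonempty fun _ hx => hx.2.le).antisymm (not_lt.1 fun hlt => ?_)
  obtain ⟨δ, hδ, hδsup, hδβ⟩ := h.2 _ hlt
  exact hδsup.not_ge (le_csSup ⟨β, fun _ hx => hx.2.le⟩ ⟨hδ, hδβ⟩)

theorem not_finite_inter_Iio (h : IsLimitPointOf β X) : ¬ (X ∩ Iio β).Finite := fun hfin => by
  have hmem := h.inter_Iio_nonempty.csSup_mem hfin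
  obtain ⟨δ, hδ, hδsup, hδβ⟩ := h.2 _ hmem.2
  exact hδsup.not_ge (le_csSup hfin.bddAbove ⟨hδ, hδβ⟩)

end IsLimitPointOf

theorem isLimitPointOf_sSup {s : Set Ordinal} (hne : s.Nonempty) (hs : BddAbove s)
    (hmem : sSup s ∉ s) : IsLimitPointOf (sSup s) s := by
  have hlt : ∀ x ∈ s, x < sSup s := fun x hx =>
    (le_csSup hs hx).lt_of_ne fun h => hmem (h ▸ hx)
  refine ⟨fun h0 => ?_, fun γ hγ => ?_⟩
  · obtain ⟨x, hx⟩ := hne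
    exact not_lt_zero (h0 ▸ hlt x hx)
  · obtain ⟨δ, hδ, hγδ⟩ := exists_lt_of_lt_csSup hne hγ
    exact ⟨δ, hδ, hγδ, hlt δ hδ⟩

theorem IsClosedIn.mem_of_isLimitPointOf {X : Set Ordinal} {α β : Ordinal}
    (hX : IsClosedIn X α) (hβ : β < α) (h : IsLimitPointOf β X) : β ∈ X := by
  simpa only [h.sSup_inter_Iio] using
    hX _ inter_subset_left h.inter_Iio_nonempty (by rwa [h.sSup_inter_Iio])

theorem isClosedIn_of_isLimitPointOf {X : Set Ordinal} {α : Ordinal} (hX : X ⊆ Iio α)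
    (h : ∀ β < α, IsLimitPointOf β X → β ∈ X) : IsClosedIn X α := by
  intro s hs hne hsup
  by_cases hmem : sSup s ∈ s
  · exact hs hmem
  · exact h _ hsup ((isLimitPointOf_sSup hne ⟨α, fun x hx => (hX (hs hx)).le⟩ hmem).mono_s1 hs)

theorem eq_inter_Iio_of_isLimitPointOf {E : Ordinal → Set Ordinal} {α : Ordinal}
    (hE : E α ⊆ Iio α) (h : ∀ β < α, IsLimitPointOf β (E α) → E β = E α ∩ Iio β) :
    ∀ β, IsLimitPointOf β (E α) → E β = E α ∩ Iio β := by
  intro β hβ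
  rcases (hβ.le_of_subset_Iio hE).lt_or_eq with hβα | rfl
  · exact h β hβα hβ
  · exact (inter_eq_left.2 hE).symm

section Ladder

variable {K : Set Ordinal.{v}} {l ξ : Ordinal.{v}}

open Classical in
/-- Above the last point of `K` below `l` there are no limit points of `K`, which is what makes
the two cases cohere. -/
noncomputable def ladder (K : Set Ordinal.{v}) (l : Ordinal.{v}) : Set Ordinal.{v} :=
  if IsLimitPointOf l K then K ∩ Iio l else Ioo (sSup (K ∩ Iio l)) l

theorem ladder_of_isLimitPointOf (h : IsLimitPointOf l K) : ladder K l = K ∩ Iio l :=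
  if_pos h

theorem ladder_of_not_isLimitPointOf (h : ¬ IsLimitPointOf l K) :
    ladder K l = Ioo (sSup (K ∩ Iio l)) l :=
  if_neg h

theorem ladder_subset_Iio : ladder K l ⊆ Iio l := by
  unfold ladder
  split_ifs
  exacts [inter_subset_right, fun _ hx => hx.2]

theorem le_sSup_inter_Iio {x : Ordinal.{v}} (hx : x ∈ K) (hxl : x < l) : x ≤ sSup (K ∩ Iio l) :=
  le_csSup ⟨l, fun _ hy => hy.2.le⟩ ⟨hx, hxl⟩

theorem sSup_inter_Iio_lt (hl : l ≠ 0) (h : ¬ IsLimitPointOf l K) : sSup (K ∩ Iio l) < l := by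
  simp only [IsLimitPointOf, hl, ne_eq, not_false_eq_true, true_and, not_forall] at h
  obtain ⟨γ, hγl, hγ⟩ := h
  exact (csSup_le' fun x hx => not_lt.1 fun hγx => hγ ⟨x, hx.1, hγx, hx.2⟩).trans_lt hγl

theorem isClubIn_ladder (hK : ∀ x, IsLimitPointOf x K → x ∈ K) (hl : Order.IsSuccLimit l) :
    IsClubIn (ladder K l) l := by
  refine ⟨ladder_subset_Iio, isClosedIn_of_isLimitPointOf ladder_subset_Iio fun β hβl hβ => ?_,
    fun γ hγ => ?_⟩
  · by_cases hlK : IsLimitPointOf l K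
    · rw [ladder_of_isLimitPointOf hlK] at hβ ⊢
      exact ⟨hK β (hβ.mono_s1 inter_subset_left), hβl⟩
    · rw [ladder_of_not_isLimitPointOf hlK] at hβ ⊢
      obtain ⟨δ, hδ, hδβ⟩ := hβ.inter_Iio_nonempty
      exact ⟨hδ.1.trans hδβ, hβl⟩
  · by_cases hlK : IsLimitPointOf l K
    · obtain ⟨δ, hδ, hγδ, hδl⟩ := hlK.2 γ hγ
      exact ⟨δ, ladder_of_isLimitPointOf hlK ▸ ⟨hδ, hδl⟩, hγδ⟩
    · have hmax : max (sSup (K ∩ Iio l)) γ < l := max_lt (sSup_inter_Iio_lt hl.ne_bot hlK) hγ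
      refine ⟨Order.succ (max (sSup (K ∩ Iio l)) γ), ?_, ?_⟩
      · rw [ladder_of_not_isLimitPointOf hlK]
        exact ⟨(le_max_left _ _).trans_lt (Order.lt_succ _), hl.succ_lt hmax⟩
      · exact (le_max_right _ _).trans_lt (Order.lt_succ _)

theorem ladder_eq_inter_Iio (hξl : ξ < l) (hξ : IsLimitPointOf ξ (ladder K l)) :
    ladder K ξ = ladder K l ∩ Iio ξ := by
  by_cases hlK : IsLimitPointOf l K
  · rw [ladder_of_isLimitPointOf hlK] at hξ ⊢
    rw [ladder_of_isLimitPointOf (hξ.mono_s1 inter_subset_left), inter_assoc,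
      Iio_inter_Iio, min_eq_right hξl.le]
  · rw [ladder_of_not_isLimitPointOf hlK] at hξ ⊢
    set g := sSup (K ∩ Iio l)
    have hgξ : g < ξ := by
      obtain ⟨δ, hδ, hδξ⟩ := hξ.inter_Iio_nonempty
      exact hδ.1.trans hδξ
    have hKξ : K ∩ Iio ξ = K ∩ Iio l := by
      ext x
      exact ⟨fun hx => ⟨hx.1, hx.2.trans hξl⟩,
        fun hx => ⟨hx.1, (le_sSup_inter_Iio hx.1 hx.2).trans_lt hgξ⟩⟩
    have hξK : ¬ IsLimitPointOf ξ K := fun h => by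
      obtain ⟨δ, hδ, hgδ, hδξ⟩ := h.2 g hgξ
      exact hgδ.not_ge (le_sSup_inter_Iio hδ (hδξ.trans hξl))
    rw [ladder_of_not_isLimitPointOf hξK, hKξ, Ioo_inter_Iio, min_eq_right hξl.le]

theorem isCoherentSeq_ladder (hK : ∀ x, IsLimitPointOf x K → x ∈ K) (lam : Ordinal.{v}) :
    IsCoherentSeq lam (ladder K) := by
  refine fun l _ hl => ⟨isClubIn_ladder hK hl, ?_⟩
  exact eq_inter_Iio_of_isLimitPointOf ladder_subset_Iio fun ξ hξl hξ => ladder_eq_inter_Iio hξl hξ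

end Ladder

section LimitClosure

variable {S : Set Ordinal.{v}}

def limitClosure (S : Set Ordinal.{v}) : Set Ordinal.{v} :=
  S ∪ {x | IsLimitPointOf x S}

theorem subset_limitClosure : S ⊆ limitClosure S :=
  subset_union_left

theorem IsLimitPointOf.of_limitClosure {x : Ordinal.{v}} (h : IsLimitPointOf x (limitClosure S)) :
    IsLimitPointOf x S := by
  refine ⟨h.1, fun γ hγ => ?_⟩
  obtain ⟨δ, hδ | hδ, hγδ, hδx⟩ := h.2 γ hγ
  · exact ⟨δ, hδ, hγδ, hδx⟩
  · obtain ⟨ε, hε, hγε, hεδ⟩ := hδ.2 γ hγδ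
    exact ⟨ε, hε, hγε, hεδ.trans hδx⟩

theorem mem_limitClosure_of_isLimitPointOf {x : Ordinal.{v}}
    (h : IsLimitPointOf x (limitClosure S)) : x ∈ limitClosure S :=
  Or.inr h.of_limitClosure

/-- Between two points of the closure there is always a point of `S`, so sending `x` to the least
point of `S` above it is strictly monotone. -/
theorem mk_limitClosure_inter_Iio_le {Λ : Ordinal.{v}} (hS : ∀ γ < Λ, ∃ x ∈ S, γ < x) :
    #↥(limitClosure S ∩ Iio Λ) ≤ #S := by
  have hne (x : ↥(limitClosure S ∩ Iio Λ)) : {y ∈ S | x.1 < y}.Nonempty := hS x.1 x.2.2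
  let next (x : ↥(limitClosure S ∩ Iio Λ)) : S := ⟨sInf {y ∈ S | x.1 < y}, (csInf_mem (hne x)).1⟩
  have hnext : StrictMono next := by
    rintro ⟨x, hx, -⟩ ⟨x', hx', hx'Λ⟩ (hxx' : x < x')
    obtain ⟨y, hyS, hxy, hyx'⟩ : ∃ y ∈ S, x < y ∧ y ≤ x' := by
      rcases hx' with hx'S | hx'S
      · exact ⟨x', hx'S, hxx', le_rfl⟩
      · obtain ⟨y, hyS, hxy, hyx'⟩ := hx'S.2 x hxx'
        exact ⟨y, hyS, hxy, hyx'.le⟩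
    show sInf {y ∈ S | x < y} < sInf {y ∈ S | x' < y}
    have hle : sInf {y ∈ S | x < y} ≤ y := csInf_le' ⟨hyS, hxy⟩
    exact hle.trans_lt (hyx'.trans_lt (csInf_mem (hne ⟨x', hx', hx'Λ⟩)).2)
  exact Cardinal.mk_le_of_injective hnext.injective

theorem exists_cofinal_subset_mk_eq_cof {o : Ordinal.{v}} (ho : Order.IsSuccLimit o) :
    ∃ S ⊆ Iio o, (∀ γ < o, ∃ x ∈ S, γ < x) ∧ #S = Cardinal.lift.{v + 1} o.cof := by
  obtain ⟨s, hs, hcard⟩ := Order.exists_cof_eq (Iio o)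
  refine ⟨Subtype.val '' s, image_subset_iff.2 fun x _ => x.2, fun γ hγ => ?_, ?_⟩
  · obtain ⟨x, hx, hγx⟩ := hs ⟨Order.succ γ, ho.succ_lt hγ⟩
    exact ⟨x, mem_image_of_mem _ hx, Order.succ_le_iff.1 hγx⟩
  · rw [Cardinal.mk_image_eq Subtype.val_injective, hcard, Ordinal.cof_Iio, Ordinal.lift_cof]

theorem mk_ladder_limitClosure_lt {Λ l : Ordinal.{v}} {μ : Cardinal.{v}}
    (hΛμ : Λ ≤ μ.ord) (hΛ : Λ ≠ 0) (hSΛ : S ⊆ Iio Λ) (hS : ∀ γ < Λ, ∃ x ∈ S, γ < x)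
    (hScard : #S ≤ Cardinal.lift.{v + 1} Λ.cof) (hl : l ≤ Λ) (hlμ : l.cof < μ) :
    #(ladder (limitClosure S) l) < Cardinal.lift.{v + 1} μ := by
  rcases hl.lt_or_eq with hlΛ | rfl
  · calc #(ladder (limitClosure S) l) ≤ #(Iio l) := Cardinal.mk_le_mk_of_subset ladder_subset_Iio
      _ = Cardinal.lift.{v + 1} l.card := Cardinal.mk_Iio_ordinal l
      _ < Cardinal.lift.{v + 1} μ := Cardinal.lift_lt.2 (Cardinal.lt_ord.1 (hlΛ.trans_le hΛμ))
  · have hlim : IsLimitPointOf l (limitClosure S) := by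
      refine ⟨hΛ, fun γ hγ => ?_⟩
      obtain ⟨x, hx, hγx⟩ := hS γ hγ
      exact ⟨x, subset_limitClosure hx, hγx, hSΛ hx⟩
    rw [ladder_of_isLimitPointOf hlim]
    exact ((mk_limitClosure_inter_Iio_le hS).trans hScard).trans_lt (Cardinal.lift_lt.2 hlμ)

end LimitClosure

section Collapse

variable {D : Set Ordinal.{u}} {α β δ : Ordinal.{u}}

noncomputable def collapse (D : Set Ordinal.{u}) (β : Ordinal.{u}) : Ordinal.{u + 1} :=
  otype (D ∩ Iio β)

theorem collapse_eq_typein (hβ : β ∈ D) :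
    collapse D β = Ordinal.typein ((· < ·) : D → D → Prop) ⟨β, hβ⟩ :=
  OrderIso.ordinalType_congr
    { toFun := fun x => ⟨⟨x.1, x.2.1⟩, x.2.2⟩
      invFun := fun y => ⟨y.1.1, y.1.2, y.2⟩
      left_inv := fun _ => rfl
      right_inv := fun _ => rfl
      map_rel_iff' := Iff.rfl }

theorem collapse_lt_otype (hβ : β ∈ D) : collapse D β < otype D := by
  rw [collapse_eq_typein hβ]
  exact Ordinal.typein_lt_type _ _

theorem exists_collapse_eq {ζ : Ordinal.{u + 1}} (hζ : ζ < otype D) :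
    ∃ δ ∈ D, collapse D δ = ζ := by
  obtain ⟨⟨δ, hδ⟩, rfl⟩ := Ordinal.typein_surj _ hζ
  exact ⟨δ, hδ, collapse_eq_typein hδ⟩

theorem collapse_inter_Iio (hδβ : δ ≤ β) : collapse (D ∩ Iio β) δ = collapse D δ := by
  rw [collapse, collapse, inter_assoc, Iio_inter_Iio, min_eq_right hδβ]

theorem otype_inter_Iio : otype (D ∩ Iio β) = collapse D β :=
  rfl

theorem collapse_lt_collapse (hδ : δ ∈ D) (hδβ : δ < β) : collapse D δ < collapse D β := by
  rw [← collapse_inter_Iio hδβ.le]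
  exact collapse_lt_otype ⟨hδ, hδβ⟩

theorem strictMonoOn_collapse : StrictMonoOn (collapse D) D :=
  fun _ hδ _ _ hδβ => collapse_lt_collapse hδ hδβ

theorem exists_lt_collapse_eq {ζ : Ordinal.{u + 1}} (hζ : ζ < collapse D β) :
    ∃ δ ∈ D, δ < β ∧ collapse D δ = ζ := by
  obtain ⟨δ, ⟨hδ, hδβ⟩, rfl⟩ := exists_collapse_eq (D := D ∩ Iio β) hζ
  exact ⟨δ, hδ, hδβ, (collapse_inter_Iio hδβ.le).symm⟩

theorem IsLimitPointOf.image_collapse {X : Set Ordinal.{u}} (hXD : X ⊆ D) (h : IsLimitPointOf β X) :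
    IsLimitPointOf (collapse D β) (collapse D '' X) := by
  refine ⟨fun h0 => ?_, fun ζ hζ => ?_⟩
  · obtain ⟨δ, hδ, hδβ⟩ := h.inter_Iio_nonempty
    exact not_lt_zero (h0 ▸ collapse_lt_collapse (hXD hδ) hδβ)
  · obtain ⟨ε, hε, hεβ, rfl⟩ := exists_lt_collapse_eq hζ
    obtain ⟨δ, hδ, hεδ, hδβ⟩ := h.2 ε hεβ
    exact ⟨_, mem_image_of_mem _ hδ, collapse_lt_collapse hε hεδ,
      collapse_lt_collapse (hXD hδ) hδβ⟩

theorem cof_otype (hDα : D ⊆ Iio α) (hD : ∀ γ < α, ∃ δ ∈ D, γ < δ) :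
    (otype D).cof = Cardinal.lift.{u + 1} α.cof := by
  rw [otype, Ordinal.cof_type, Ordinal.lift_cof, ← Ordinal.cof_Iio]
  refine Order.cof_congr_of_strictMono (f := fun x : D => (⟨x.1, hDα x.2⟩ : Iio α))
    (fun _ _ h => h) fun y => ?_
  obtain ⟨δ, hδ, hyδ⟩ := hD y.1 y.2
  exact ⟨_, mem_range_self ⟨δ, hδ⟩, hyδ.le⟩

theorem isSuccLimit_otype (hα : Order.IsSuccLimit α) (hDα : D ⊆ Iio α)
    (hD : ∀ γ < α, ∃ δ ∈ D, γ < δ) : Order.IsSuccLimit (otype D) := by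
  rw [← Ordinal.one_lt_cof_iff, cof_otype hDα hD, ← Cardinal.lift_one.{u, u + 1},
    Cardinal.lift_lt]
  exact Ordinal.one_lt_cof_iff.2 hα

end Collapse

section CollapsePullback

variable {D : Set Ordinal.{u}} {c : Ordinal.{u + 1} → Set Ordinal.{u + 1}} {α β : Ordinal.{u}}

def collapsePullback (c : Ordinal.{u + 1} → Set Ordinal.{u + 1}) (D : Set Ordinal.{u}) :
    Set Ordinal.{u} :=
  {β ∈ D | collapse D β ∈ c (otype D)}

theorem collapsePullback_subset : collapsePullback c D ⊆ D :=
  fun _ h => h.1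

theorem isLimitPointOf_collapse_of_collapsePullback
    (h : IsLimitPointOf β (collapsePullback c D)) : IsLimitPointOf (collapse D β) (c (otype D)) :=
  (h.image_collapse collapsePullback_subset).mono_s1 (image_subset_iff.2 fun _ hx => hx.2)

theorem isClubIn_collapsePullback (hDα : D ⊆ Iio α) (hDcl : IsClosedIn D α)
    (hD : ∀ γ < α, ∃ δ ∈ D, γ < δ) (hc : IsClubIn (c (otype D)) (otype D)) :
    IsClubIn (collapsePullback c D) α := by
  have hsub : collapsePullback c D ⊆ Iio α := fun _ hx => hDα hx.1
  refine ⟨hsub, isClosedIn_of_isLimitPointOf hsub fun β hβα hβ => ?_, fun γ hγ => ?_⟩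
  · have hβD : β ∈ D := hDcl.mem_of_isLimitPointOf hβα (hβ.mono_s1 collapsePullback_subset)
    exact ⟨hβD, hc.2.1.mem_of_isLimitPointOf (collapse_lt_otype hβD)
      (isLimitPointOf_collapse_of_collapsePullback hβ)⟩
  · obtain ⟨δ₀, hδ₀, hγδ₀⟩ := hD γ hγ
    obtain ⟨ζ, hζ, hδ₀ζ⟩ := hc.2.2 _ (collapse_lt_otype hδ₀)
    obtain ⟨δ, hδ, rfl⟩ := exists_collapse_eq (hc.1 hζ)
    exact ⟨δ, ⟨hδ, hζ⟩, hγδ₀.trans ((strictMonoOn_collapse.lt_iff_lt hδ₀ hδ).1 hδ₀ζ)⟩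

theorem collapsePullback_inter_Iio
    (hc : c (collapse D β) = c (otype D) ∩ Iio (collapse D β)) :
    collapsePullback c (D ∩ Iio β) = collapsePullback c D ∩ Iio β := by
  ext x
  simp only [collapsePullback, mem_ofPred_eq, mem_inter_iff, mem_Iio, otype_inter_Iio, hc]
  constructor
  · rintro ⟨⟨hxD, hxβ⟩, hx, -⟩
    exact ⟨⟨hxD, collapse_inter_Iio hxβ.le ▸ hx⟩, hxβ⟩
  · rintro ⟨⟨hxD, hx⟩, hxβ⟩
    rw [collapse_inter_Iio hxβ.le]
    exact ⟨⟨hxD, hxβ⟩, hx, collapse_lt_collapse hxD hxβ⟩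

theorem lift_mk_collapsePullback_le :
    Cardinal.lift.{u + 2} #(collapsePullback c D) ≤ #(c (otype D)) := by
  have hinj : Function.Injective fun x : collapsePullback c D =>
      (⟨collapse D x, x.2.2⟩ : c (otype D)) := fun x y hxy =>
    Subtype.ext (strictMonoOn_collapse.injOn x.2.1 y.2.1 (congrArg Subtype.val hxy))
  exact (Cardinal.lift_mk_le_lift_mk_of_injective hinj).trans_eq
    (Cardinal.lift_id'.{u + 1, u + 2} _)

end CollapsePullback

section OmegaClub

variable {α : Ordinal.{u}}

theorem exists_strictMono_nat_cofinal (hα : Order.IsSuccLimit α) (hcof : α.cof ≤ ℵ₀) :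
    ∃ g : ℕ → Ordinal.{u}, StrictMono g ∧ (∀ n, g n < α) ∧ ∀ γ < α, ∃ n, γ < g n := by
  have hcof' : α.cof.ord = Ordinal.omega0 := by
    rw [hcof.antisymm (Ordinal.aleph0_le_cof_iff.2 (Ordinal.one_lt_cof_iff.2 hα)),
      Cardinal.ord_aleph0]
  obtain ⟨f, hf⟩ := Ordinal.exists_isFundamentalSeq hcof'
  let g (n : ℕ) : Ordinal.{u} := (f ⟨n, Ordinal.natCast_lt_omega0 n⟩).1
  have hg : StrictMono g := fun m n hmn => hf.strictMono (Subtype.mk_lt_mk.2 (Nat.cast_lt.2 hmn))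
  refine ⟨g, hg, fun n => (f _).2, fun γ hγ => ?_⟩
  obtain ⟨_, ⟨⟨i, hi⟩, rfl⟩, hγi⟩ := hf.isCofinal_range ⟨γ, hγ⟩
  obtain ⟨n, rfl⟩ := Ordinal.lt_omega0.1 hi
  exact ⟨n + 1, (show γ ≤ g n from hγi).trans_lt (hg n.lt_succ_self)⟩

/-- A club in `α` of order type `ω`, when `α` is a limit of countable cofinality (junk
otherwise). -/
noncomputable def omegaClub (α : Ordinal.{u}) : Set Ordinal.{u} :=
  Classical.epsilon fun X => X.Countable ∧ IsClubIn X α ∧ ∀ β < α, ¬ IsLimitPointOf β X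

theorem omegaClub_spec (hα : Order.IsSuccLimit α) (hcof : α.cof ≤ ℵ₀) :
    (omegaClub α).Countable ∧ IsClubIn (omegaClub α) α ∧
      ∀ β < α, ¬ IsLimitPointOf β (omegaClub α) := by
  refine Classical.epsilon_spec (p := fun X => X.Countable ∧ IsClubIn X α ∧
    ∀ β < α, ¬ IsLimitPointOf β X) ?_
  obtain ⟨g, hg, hgα, hgU⟩ := exists_strictMono_nat_cofinal hα hcof
  have hsub : range g ⊆ Iio α := range_subset_iff.2 hgα
  have hfin (β : Ordinal.{u}) (hβ : β < α) : (range g ∩ Iio β).Finite := by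
    obtain ⟨n, hβn⟩ := hgU β hβ
    refine ((finite_Iio n).image g).subset ?_
    rintro _ ⟨⟨m, rfl⟩, hmβ⟩
    exact ⟨m, hg.lt_iff_lt.1 (hmβ.trans hβn), rfl⟩
  have hlim (β : Ordinal.{u}) (hβ : β < α) : ¬ IsLimitPointOf β (range g) :=
    fun h => h.not_finite_inter_Iio (hfin β hβ)
  refine ⟨range g, countable_range g,
    ⟨hsub, isClosedIn_of_isLimitPointOf hsub fun β hβ h => (hlim β hβ h).elim, fun γ hγ => ?_⟩,
    hlim⟩
  obtain ⟨n, hn⟩ := hgU γ hγ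
  exact ⟨g n, mem_range_self n, hn⟩

end OmegaClub

section SquareSeq

variable {C : Ordinal.{u} → Set Ordinal.{u}} {c : Ordinal.{u + 1} → Set Ordinal.{u + 1}}
  {α θ : Ordinal.{u}}

open Classical in
noncomputable def squareSeq (C : Ordinal.{u} → Set Ordinal.{u})
    (c : Ordinal.{u + 1} → Set Ordinal.{u + 1}) (α : Ordinal.{u}) : Set Ordinal.{u} :=
  if ∀ γ < α, ∃ δ ∈ C α, γ < δ then collapsePullback c (C α) else omegaClub α

theorem squareSeq_of_unbounded (h : ∀ γ < α, ∃ δ ∈ C α, γ < δ) :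
    squareSeq C c α = collapsePullback c (C α) :=
  if_pos h

theorem squareSeq_of_bounded (h : ¬ ∀ γ < α, ∃ δ ∈ C α, γ < δ) :
    squareSeq C c α = omegaClub α :=
  if_neg h

theorem isCoherentSeq_squareSeq {Λ : Ordinal.{u + 1}} (hC : AlmostCoherentOn (Iio θ) C)
    (hot : ∀ α < θ, otype (C α) < Λ) (hc : IsCoherentSeq Λ c) :
    IsCoherentSeq θ (squareSeq C c) := by
  intro α hαθ hα
  obtain ⟨-, hCα, hCcl, hCU, hCcoh⟩ := hC α hαθ
  have hCsub : C α ⊆ Iio α := fun β hβ => (hCα β hβ).1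
  by_cases hU : ∀ γ < α, ∃ δ ∈ C α, γ < δ
  · obtain ⟨hcclub, hccoh⟩ := hc _ (hot α hαθ) (isSuccLimit_otype hα hCsub hU)
    have hclub := isClubIn_collapsePullback hCsub hCcl hU hcclub
    rw [← squareSeq_of_unbounded hU] at hclub
    refine ⟨hclub, eq_inter_Iio_of_isLimitPointOf hclub.1 fun β hβα hβ => ?_⟩
    rw [squareSeq_of_unbounded hU] at hβ ⊢
    have hβC : β ∈ C α := hCcl.mem_of_isLimitPointOf hβα (hβ.mono_s1 collapsePullback_subset)
    have hCβ : C β = C α ∩ Iio β := hCcoh β hβC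
    have hUβ : ∀ γ < β, ∃ δ ∈ C β, γ < δ := fun γ hγ => by
      obtain ⟨δ, hδ, hγδ, hδβ⟩ := hβ.2 γ hγ
      exact ⟨δ, hCβ ▸ ⟨hδ.1, hδβ⟩, hγδ⟩
    rw [squareSeq_of_unbounded hUβ, hCβ]
    exact collapsePullback_inter_Iio (hccoh _ (isLimitPointOf_collapse_of_collapsePullback hβ))
  · obtain ⟨-, hclub, hnolim⟩ := omegaClub_spec hα (not_lt.1 (mt hCU hU))
    rw [← squareSeq_of_bounded hU] at hclub hnolim
    exact ⟨hclub, eq_inter_Iio_of_isLimitPointOf hclub.1 fun β hβα hβ => (hnolim β hβα hβ).elim⟩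

theorem mk_squareSeq_lt {κ : Cardinal.{u}} {Λ : Ordinal.{u + 1}} (hκ : ℵ₀ < κ)
    (hC : AlmostCoherentOn (Iio θ) C) (hαθ : α < θ) (hα : Order.IsSuccLimit α)
    (hcof : α.cof < κ) (hot : otype (C α) ≤ Λ)
    (hc : ∀ l ≤ Λ, l.cof < Cardinal.lift.{u + 1} κ →
      #(c l) < Cardinal.lift.{u + 2} (Cardinal.lift.{u + 1} κ)) :
    #(squareSeq C c α) < Cardinal.lift.{u + 1} κ := by
  obtain ⟨-, hCα, -, hCU, -⟩ := hC α hαθ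
  by_cases hU : ∀ γ < α, ∃ δ ∈ C α, γ < δ
  · have hCsub : C α ⊆ Iio α := fun β hβ => (hCα β hβ).1
    have hsmall := hc _ hot (by rw [cof_otype hCsub hU]; exact Cardinal.lift_lt.2 hcof)
    rw [squareSeq_of_unbounded hU, ← Cardinal.lift_lt.{u + 1, u + 2}]
    exact lift_mk_collapsePullback_le.trans_lt hsmall
  · rw [squareSeq_of_bounded hU]
    have hcount := (omegaClub_spec hα (not_lt.1 (mt hCU hU))).1
    exact (Cardinal.mk_le_aleph0_iff.2 hcount.to_subtype).trans_lt (Cardinal.aleph0_lt_lift.2 hκ)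

end SquareSeq

/-- `□'_κ` implies `□_κ`: if there is an almost coherent sequence
`⟨C α : α < κ⁺⟩` with `ot (C α) ≤ κ` for all `α < κ⁺`, then there is a coherent
sequence `⟨E α : α < κ⁺⟩` such that for every limit `α < κ⁺`, if `cof α < κ`
then `|E α| < κ`. -/
theorem square_of_squarePrime (κ : Cardinal.{u})
    (hκ : Cardinal.aleph0 < κ)
    (C : Ordinal.{u} → Set Ordinal.{u})
    (hAC : AlmostCoherentOn (Set.Iio (Order.succ κ).ord) C)
    (hot : ∀ α < (Order.succ κ).ord, OtypeLE (C α) κ.ord) :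
    ∃ E : Ordinal.{u} → Set Ordinal.{u},
      IsCoherentSeq (Order.succ κ).ord E ∧
      ∀ α < (Order.succ κ).ord, Order.IsSuccLimit α → α.cof < κ → Cardinal.mk (E α) < Cardinal.lift.{u + 1} κ := by
  have hΛ : Order.IsSuccLimit (Ordinal.lift.{u + 1} κ.ord) :=
    Ordinal.isSuccLimit_lift.2 (Cardinal.isSuccLimit_ord hκ.le)
  obtain ⟨S, hSΛ, hS, hScard⟩ := exists_cofinal_subset_mk_eq_cof hΛ
  refine ⟨squareSeq C (ladder (limitClosure S)), ?_, fun α hα hαlim hcof => ?_⟩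
  · exact isCoherentSeq_squareSeq hAC (fun α hα => (hot α hα).trans_lt (Order.lt_succ _))
      (isCoherentSeq_ladder (fun _ => mem_limitClosure_of_isLimitPointOf) _)
  · refine mk_squareSeq_lt hκ hAC hα hαlim hcof (hot α hα) fun l hl hlκ => ?_
    exact mk_ladder_limitClosure_lt (Cardinal.lift_ord κ).le hΛ.ne_bot hSΛ hS hScard.le hl hlκ
end
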